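/- For every infinite set of real numbers X: (1) if X satisfies binom(Ω,T) (every countable open ω-cover of X contains a τ-cover of X), then X satisfies Sfin(Γ,T); (2) if X satisfies binom(B_Ω,B_T), then X satisfies Sfin(B_Γ,B_T). -/
import Mathlib


open Set

namespace TauCoverPaper

/-- `a ⊆* b`: `a \ b` is finite. -/
def AlmostSubset (a b : Set ℕ) : Prop := (a \ b).Finite

/-- `Y` is linearly quasiordered by `⊆*`. -/
def LinQuasi (Y : Set (Set ℕ)) : Prop :=
  ∀ a ∈ Y, ∀ b ∈ Y, AlmostSubset a b ∨ AlmostSubset b a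

/-- `a` is a pseudo-intersection of the family `Y`. -/
def PseudoIntersection (a : Set ℕ) (Y : Set (Set ℕ)) : Prop :=
  a.Infinite ∧ ∀ b ∈ Y, AlmostSubset a b

/-- `Y` is centered: every nonempty finite subfamily has infinite intersection. -/
def Centered (Y : Set (Set ℕ)) : Prop :=
  ∀ F : Set (Set ℕ), F ⊆ Y → F.Finite → F.Nonempty → (⋂₀ F).Infinite

/-- A tower: a family of infinite subsets of `ℕ`, linearly quasiordered by `⊆*`,
with no pseudo-intersection. -/
def IsTower (Y : Set (Set ℕ)) : Prop :=
  (∀ a ∈ Y, a.Infinite) ∧ LinQuasi Y ∧ ¬ ∃ a, PseudoIntersection a Y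

variable {α : Type}

/-- A cover of the space `α`: the union is everything, and the whole space is
not a member. -/
def IsCover (𝒰 : Set (Set α)) : Prop := ⋃₀ 𝒰 = univ ∧ univ ∉ 𝒰

/-- A large cover: each point belongs to infinitely many members. -/
def IsLargeCover (𝒰 : Set (Set α)) : Prop :=
  IsCover 𝒰 ∧ ∀ x : α, {U ∈ 𝒰 | x ∈ U}.Infinite

/-- An ω-cover: each finite set is contained in some member. -/
def IsOmegaCover (𝒰 : Set (Set α)) : Prop :=
  IsCover 𝒰 ∧ ∀ F : Set α, F.Finite → ∃ U ∈ 𝒰, F ⊆ U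

/-- A γ-cover: infinite, and each point belongs to all but finitely many members. -/
def IsGammaCover (𝒰 : Set (Set α)) : Prop :=
  IsCover 𝒰 ∧ 𝒰.Infinite ∧ ∀ x : α, {U ∈ 𝒰 | x ∉ U}.Finite

/-- A τ-cover: a large cover such that for all `x, y`, one of the sets
`{U : x ∈ U, y ∉ U}`, `{U : y ∈ U, x ∉ U}` is finite. -/
def IsTauCover (𝒰 : Set (Set α)) : Prop :=
  IsLargeCover 𝒰 ∧ ∀ x y : α,
    {U ∈ 𝒰 | x ∈ U ∧ y ∉ U}.Finite ∨ {U ∈ 𝒰 | y ∈ U ∧ x ∉ U}.Finite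

/-- A τ*-cover: a large, countably infinite cover which, enumerated bijectively
as `⟨Uₙ⟩`, admits for each point `y` an infinite `r y ⊆ {n | y ∈ Uₙ}` such that
the family `{r y}` is linearly quasiordered by `⊆*`. -/
def IsTauStarCover (𝒰 : Set (Set α)) : Prop :=
  IsLargeCover 𝒰 ∧
  ∃ U : ℕ → Set α, Function.Injective U ∧ Set.range U = 𝒰 ∧
    ∃ r : α → Set ℕ,
      (∀ y : α, (r y).Infinite ∧ r y ⊆ {n | y ∈ U n}) ∧
      (∀ y z : α, AlmostSubset (r y) (r z) ∨ AlmostSubset (r z) (r y))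

/-- Ω : countable open ω-covers. -/
def OpenOmega (α : Type) [TopologicalSpace α] : Set (Set (Set α)) :=
  {𝒰 | 𝒰.Countable ∧ (∀ U ∈ 𝒰, IsOpen U) ∧ IsOmegaCover 𝒰}

/-- Γ : countable open γ-covers. -/
def OpenGamma (α : Type) [TopologicalSpace α] : Set (Set (Set α)) :=
  {𝒰 | 𝒰.Countable ∧ (∀ U ∈ 𝒰, IsOpen U) ∧ IsGammaCover 𝒰}

/-- T : countable open τ-covers. -/
def OpenTau (α : Type) [TopologicalSpace α] : Set (Set (Set α)) :=
  {𝒰 | 𝒰.Countable ∧ (∀ U ∈ 𝒰, IsOpen U) ∧ IsTauCover 𝒰}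

/-- T* : countable open τ*-covers. -/
def OpenTauStar (α : Type) [TopologicalSpace α] : Set (Set (Set α)) :=
  {𝒰 | 𝒰.Countable ∧ (∀ U ∈ 𝒰, IsOpen U) ∧ IsTauStarCover 𝒰}

/-- B_Ω : countable Borel ω-covers. -/
def BorelOmega (α : Type) [MeasurableSpace α] : Set (Set (Set α)) :=
  {𝒰 | 𝒰.Countable ∧ (∀ U ∈ 𝒰, MeasurableSet U) ∧ IsOmegaCover 𝒰}

/-- B_Γ : countable Borel γ-covers. -/
def BorelGamma (α : Type) [MeasurableSpace α] : Set (Set (Set α)) :=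
  {𝒰 | 𝒰.Countable ∧ (∀ U ∈ 𝒰, MeasurableSet U) ∧ IsGammaCover 𝒰}

/-- B_T : countable Borel τ-covers. -/
def BorelTau (α : Type) [MeasurableSpace α] : Set (Set (Set α)) :=
  {𝒰 | 𝒰.Countable ∧ (∀ U ∈ 𝒰, MeasurableSet U) ∧ IsTauCover 𝒰}

/-- The selection principle S₁(𝔘,𝔙). -/
def S1 (𝔘 𝔙 : Set (Set (Set α))) : Prop :=
  ∀ 𝒰 : ℕ → Set (Set α), (∀ n, 𝒰 n ∈ 𝔘) →
    ∃ V : ℕ → Set α, (∀ n, V n ∈ 𝒰 n) ∧ Set.range V ∈ 𝔙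

/-- The selection principle Sfin(𝔘,𝔙). -/
def Sfin (𝔘 𝔙 : Set (Set (Set α))) : Prop :=
  ∀ 𝒰 : ℕ → Set (Set α), (∀ n, 𝒰 n ∈ 𝔘) →
    ∃ F : ℕ → Set (Set α), (∀ n, (F n).Finite ∧ F n ⊆ 𝒰 n) ∧ (⋃ n, F n) ∈ 𝔙

/-- The selection principle Ufin(𝔘,𝔙). -/
def Ufin (𝔘 𝔙 : Set (Set (Set α))) : Prop :=
  ∀ 𝒰 : ℕ → Set (Set α), (∀ n, 𝒰 n ∈ 𝔘) →
    (∀ n, ¬ ∃ F : Set (Set α), F ⊆ 𝒰 n ∧ F.Finite ∧ ⋃₀ F = univ) →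
    ∃ F : ℕ → Set (Set α), (∀ n, (F n).Finite ∧ F n ⊆ 𝒰 n) ∧
      Set.range (fun n => ⋃₀ (F n)) ∈ 𝔙

/-- binom(𝔘,𝔙): each member of 𝔘 contains a subfamily belonging to 𝔙. -/
def Binom (𝔘 𝔙 : Set (Set (Set α))) : Prop :=
  ∀ 𝒰 ∈ 𝔘, ∃ 𝒱 ⊆ 𝒰, 𝒱 ∈ 𝔙

/-- Borel measurability of a map into `P(ℕ)` (identified with the Cantor
space via characteristic functions): each coordinate is measurable. -/
def BorelMeasSets {β : Type} [MeasurableSpace β] (f : β → Set ℕ) : Prop :=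
  ∀ n : ℕ, MeasurableSet {x | n ∈ f x}

/-- The excluded middle property for a family `Y ⊆ ℕ^ℕ`. -/
def ExcludedMiddleProp (Y : Set (ℕ → ℕ)) : Prop :=
  ∃ g : ℕ → ℕ,
    (∀ f ∈ Y, {n | f n < g n}.Infinite) ∧
    ∀ f ∈ Y, ∀ h ∈ Y,
      {n | f n < g n ∧ g n ≤ h n}.Finite ∨ {n | h n < g n ∧ g n ≤ f n}.Finite

/-- non(J): the minimal cardinality of a set of reals not satisfying `J`. -/
noncomputable def nonCard (J : Set ℝ → Prop) : Cardinal :=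
  sInf {c : Cardinal | ∃ X : Set ℝ, ¬ J X ∧ Cardinal.mk ↥X = c}

/-- add(J): the minimal cardinality of a family of sets of reals, each
satisfying `J`, whose union does not satisfy `J`. -/
noncomputable def addCard (J : Set ℝ → Prop) : Cardinal :=
  sInf {c : Cardinal | ∃ 𝔉 : Set (Set ℝ),
    (∀ A ∈ 𝔉, J A) ∧ ¬ J (⋃₀ 𝔉) ∧ Cardinal.mk ↥𝔉 = c}

/-- 𝔱 : the minimal cardinality of a tower. -/
noncomputable def towerCard : Cardinal :=
  sInf {c : Cardinal | ∃ Y : Set (Set ℕ), IsTower Y ∧ Cardinal.mk ↥Y = c}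


lemma exists_enum {β : Type} {s : Set β} (hc : s.Countable) (hi : s.Infinite) :
    ∃ e : ℕ → β, Function.Injective e ∧ Set.range e = s := by
  haveI := hc.to_subtype
  haveI := hi.to_subtype
  obtain ⟨d⟩ : Nonempty (Denumerable ↥s) := nonempty_denumerable _
  letI := d
  refine ⟨fun n => ((Denumerable.eqv ↥s).symm n : β), ?_, ?_⟩
  · exact Subtype.val_injective.comp (Denumerable.eqv ↥s).symm.injective
  · have h : (fun n => ((Denumerable.eqv ↥s).symm n : β)) =
      (Subtype.val : ↥s → β) ∘ (Denumerable.eqv ↥s).symm := rfl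
    rw [h, Set.range_comp, Equiv.range_eq_univ, Set.image_univ, Subtype.range_coe]

lemma exists_inj_seq {β : Type} (D : ℕ → Set β) (hD : ∀ k, (D k).Infinite) :
    ∃ w : ℕ → β, Function.Injective w ∧ ∀ k, w k ∈ D k := by
  classical
  have key : ∀ (k : ℕ) (s : Finset β), ∃ x, x ∈ D k ∧ x ∉ s := by
    intro k s
    obtain ⟨x, hx⟩ := ((hD k).diff s.finite_toSet).nonempty
    exact ⟨x, hx.1, fun h => hx.2 (by simpa using h)⟩
  let pick : ℕ → Finset β → β := fun k s => (key k s).choose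
  have hpick : ∀ k s, pick k s ∈ D k ∧ pick k s ∉ s := fun k s => (key k s).choose_spec
  let F : ℕ → Finset β := fun k => Nat.rec ∅ (fun k s => insert (pick k s) s) k
  have hF : ∀ k, F (k + 1) = insert (pick k (F k)) (F k) := fun k => rfl
  let w : ℕ → β := fun k => pick k (F k)
  have hmem : ∀ j k, j < k → w j ∈ F k := by
    intro j k hjk
    induction k with
    | zero => omega
    | succ k ih =>
      rw [hF]
      rcases Nat.lt_succ_iff_lt_or_eq.1 hjk with h | h
      · exact Finset.mem_insert_of_mem (ih h)
      · subst h; exact Finset.mem_insert_self _ _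
  refine ⟨w, ?_, fun k => (hpick k (F k)).1⟩
  intro a b hab
  by_contra hne
  rcases Nat.lt_or_ge a b with h | h
  · have := hmem a b h
    rw [show w a = w b from hab] at this
    exact (hpick b (F b)).2 this
  · have h' : b < a := by omega
    have := hmem b a h'
    rw [show w b = w a from hab.symm] at this
    exact (hpick a (F a)).2 this

lemma tau_min {α β : Type} (T : α → Set β)
    (hlin : ∀ x y, (T x \ T y).Finite ∨ (T y \ T x).Finite) :
    ∀ F : Finset α, F.Nonempty → ∃ z ∈ F, ∀ y ∈ F, (T z \ T y).Finite := by
  classical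
  intro F
  induction F using Finset.induction_on with
  | empty => exact fun h => absurd h (by simp)
  | @insert a F ha ih =>
    intro _
    rcases F.eq_empty_or_nonempty with rfl | hne
    · refine ⟨a, Finset.mem_insert_self _ _, fun y hy => ?_⟩
      have hy' : y = a := by simpa using hy
      subst hy'
      simp
    · obtain ⟨z, hz, hmin⟩ := ih hne
      rcases hlin z a with h | h
      · refine ⟨z, Finset.mem_insert_of_mem hz, fun y hy => ?_⟩
        rcases Finset.mem_insert.1 hy with rfl | hy
        · exact h
        · exact hmin y hy
      · refine ⟨a, Finset.mem_insert_self _ _, fun y hy => ?_⟩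
        rcases Finset.mem_insert.1 hy with rfl | hy
        · simp
        · refine (h.union (hmin y hy)).subset ?_
          intro W hW
          by_cases hWz : W ∈ T z
          · exact Or.inr ⟨hWz, hW.2⟩
          · exact Or.inl ⟨hW.1, hWz⟩

lemma tau_inter_infinite {α : Type} [Nonempty α] {𝒲 : Set (Set α)}
    (hinf : ∀ x : α, {W ∈ 𝒲 | x ∈ W}.Infinite)
    (hlin : ∀ x y : α, ({W ∈ 𝒲 | x ∈ W} \ {W ∈ 𝒲 | y ∈ W}).Finite ∨
        ({W ∈ 𝒲 | y ∈ W} \ {W ∈ 𝒲 | x ∈ W}).Finite)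
    {F : Set α} (hF : F.Finite) : {W ∈ 𝒲 | ∀ x ∈ F, x ∈ W}.Infinite := by
  classical
  rcases F.eq_empty_or_nonempty with rfl | hne
  · refine (hinf (Classical.arbitrary α)).mono ?_
    intro W hW
    exact ⟨hW.1, by simp⟩
  · obtain ⟨z, hzF, hmin⟩ := tau_min (fun x => {W ∈ 𝒲 | x ∈ W}) hlin hF.toFinset
      (by simpa using hne)
    have hbig : ({W ∈ 𝒲 | z ∈ W} \
        ⋃ y ∈ F, ({W ∈ 𝒲 | z ∈ W} \ {W ∈ 𝒲 | y ∈ W})).Infinite :=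
      (hinf z).diff (hF.biUnion (fun y hy => hmin y (by simpa using hy)))
    refine hbig.mono ?_
    intro W hW
    refine ⟨hW.1.1, fun x hx => ?_⟩
    by_contra hxW
    exact hW.2 (Set.mem_biUnion hx ⟨hW.1, fun h => hxW h.2⟩)


lemma binom_to_sfin {α : Type} [Nonempty α] (good : Set α → Prop)
    (hgood : ∀ U V : Set α, good U → good V → good (U ∩ V))
    (hb : Binom {𝒰 : Set (Set α) | 𝒰.Countable ∧ (∀ U ∈ 𝒰, good U) ∧ IsOmegaCover 𝒰}
        {𝒰 : Set (Set α) | 𝒰.Countable ∧ (∀ U ∈ 𝒰, good U) ∧ IsTauCover 𝒰}) :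
    Sfin {𝒰 : Set (Set α) | 𝒰.Countable ∧ (∀ U ∈ 𝒰, good U) ∧ IsGammaCover 𝒰}
        {𝒰 : Set (Set α) | 𝒰.Countable ∧ (∀ U ∈ 𝒰, good U) ∧ IsTauCover 𝒰} := by
  classical
  intro 𝒰 h𝒰
  have henum : ∀ n : ℕ, ∃ e : ℕ → Set α, Function.Injective e ∧ Set.range e = 𝒰 n :=
    fun n => exists_enum (h𝒰 n).1 (h𝒰 n).2.2.2.1
  choose e einj erange using henum
  have emem : ∀ n m, e n m ∈ 𝒰 n := fun n m => by rw [← erange n]; exact Set.mem_range_self m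
  have egood : ∀ n m, good (e n m) := fun n m => (h𝒰 n).2.1 _ (emem n m)
  have hUnotuniv : ∀ n, (univ : Set α) ∉ 𝒰 n := fun n => (h𝒰 n).2.2.1.2
  have heneq : ∀ n m, e n m ≠ univ := by
    intro n m h
    exact hUnotuniv n (by rw [← h]; exact emem n m)
  have htr : ∀ (n : ℕ) (x : α), {m | x ∉ e n m}.Finite := by
    intro n x
    have hfin : {U ∈ 𝒰 n | x ∉ U}.Finite := (h𝒰 n).2.2.2.2 x
    have hsub : {m | x ∉ e n m} ⊆ (e n) ⁻¹' {U ∈ 𝒰 n | x ∉ U} := by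
      intro m hm
      exact ⟨emem n m, hm⟩
    exact (hfin.preimage (einj n).injOn).subset hsub
  have hgne : ∀ n : ℕ, ∃ x, x ∉ e 0 n := fun n =>
    Set.ne_univ_iff_exists_notMem _ |>.1 (heneq 0 n)
  choose xout hxout using hgne
  let M : ℕ → ℕ → Set α := fun n m => e 0 n ∩ e n m
  have hMsub1 : ∀ n m, M n m ⊆ e 0 n := fun n m => Set.inter_subset_left
  let 𝒱 : Set (Set α) := {S | ∃ n m, S = M n m}
  have h𝒱count : 𝒱.Countable := by
    have h : 𝒱 = Set.range (fun p : ℕ × ℕ => M p.1 p.2) := by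
      ext S
      constructor
      · rintro ⟨n, m, rfl⟩; exact ⟨(n, m), rfl⟩
      · rintro ⟨p, rfl⟩; exact ⟨p.1, p.2, rfl⟩
    rw [h]; exact Set.countable_range _
  have h𝒱good : ∀ S ∈ 𝒱, good S := by
    rintro S ⟨n, m, rfl⟩
    exact hgood _ _ (egood 0 n) (egood n m)
  have h𝒱omg : ∀ F : Set α, F.Finite → ∃ U ∈ 𝒱, F ⊆ U := by
    intro F hF
    have hb0 : {n | ¬ F ⊆ e 0 n}.Finite := by
      refine (hF.biUnion (fun x _ => htr 0 x)).subset ?_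
      intro n hn
      obtain ⟨x, hxF, hx⟩ := Set.not_subset.1 hn
      exact Set.mem_biUnion hxF hx
    obtain ⟨n, hn⟩ := hb0.infinite_compl.nonempty
    have hn' : F ⊆ e 0 n := not_not.1 hn
    have hb1 : {m | ¬ F ⊆ e n m}.Finite := by
      refine (hF.biUnion (fun x _ => htr n x)).subset ?_
      intro m hm
      obtain ⟨x, hxF, hx⟩ := Set.not_subset.1 hm
      exact Set.mem_biUnion hxF hx
    obtain ⟨m, hm⟩ := hb1.infinite_compl.nonempty
    have hm' : F ⊆ e n m := not_not.1 hm
    exact ⟨M n m, ⟨n, m, rfl⟩, Set.subset_inter hn' hm'⟩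
  have h𝒱mem : 𝒱 ∈ {𝒰 : Set (Set α) | 𝒰.Countable ∧ (∀ U ∈ 𝒰, good U) ∧ IsOmegaCover 𝒰} := by
    refine ⟨h𝒱count, h𝒱good, ⟨?_, ?_⟩, h𝒱omg⟩
    · apply Set.eq_univ_of_forall
      intro x
      obtain ⟨U, hU, hxU⟩ := h𝒱omg {x} (Set.finite_singleton x)
      exact ⟨U, hU, hxU rfl⟩
    · rintro ⟨n, m, h⟩
      have huniv : (univ : Set α) ⊆ e 0 n := by
        rw [h]; exact hMsub1 n m
      exact heneq 0 n (Set.eq_univ_of_univ_subset huniv)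
  obtain ⟨𝒲, h𝒲sub, h𝒲count, h𝒲good, h𝒲tau⟩ := hb 𝒱 h𝒱mem
  have hTinf : ∀ x : α, {W ∈ 𝒲 | x ∈ W}.Infinite := h𝒲tau.1.2
  have hTlin : ∀ x y : α, ({W ∈ 𝒲 | x ∈ W} \ {W ∈ 𝒲 | y ∈ W}).Finite ∨
      ({W ∈ 𝒲 | y ∈ W} \ {W ∈ 𝒲 | x ∈ W}).Finite := by
    intro x y
    have h := h𝒲tau.2 x y
    have e1 : ∀ a b : α, {U ∈ 𝒲 | a ∈ U ∧ b ∉ U} =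
        {W ∈ 𝒲 | a ∈ W} \ {W ∈ 𝒲 | b ∈ W} := by
      intro a b
      ext W
      simp only [Set.mem_setOf_eq, Set.mem_diff]
      tauto
    rw [e1 x y, e1 y x] at h
    exact h
  have homega𝒲 : ∀ F : Set α, F.Finite → {W ∈ 𝒲 | ∀ x ∈ F, x ∈ W}.Infinite :=
    fun F hF => tau_inter_infinite hTinf hTlin hF
  have hrep : ∀ W : Set α, ∃ p : ℕ × ℕ, W ∈ 𝒲 → W = M p.1 p.2 := by
    intro W
    by_cases h : W ∈ 𝒲
    · obtain ⟨n, m, hnm⟩ := h𝒲sub h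
      exact ⟨(n, m), fun _ => hnm⟩
    · exact ⟨(0, 0), fun h' => absurd h' h⟩
  choose rp hrp using hrep
  let R : ℕ → Set (Set α) := fun n => {W ∈ 𝒲 | (rp W).1 = n}
  have keystar : ∀ n : ℕ, (R n).Infinite → ∀ y, y ∈ e 0 n →
      ({W ∈ 𝒲 | xout n ∈ W} \ {W ∈ 𝒲 | y ∈ W}).Finite := by
    intro n hRinf y hy
    have hsubg : ∀ W ∈ R n, W ⊆ e 0 n := by
      intro W hW
      have h1 := hrp W hW.1
      rw [hW.2] at h1
      rw [h1]
      exact hMsub1 n _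
    have hfin1 : {W ∈ R n | y ∉ W}.Finite := by
      have himg : (fun W => (rp W).2) '' {W ∈ R n | y ∉ W} ⊆ {m | y ∉ e n m} := by
        rintro _ ⟨W, hW, rfl⟩
        intro hmem
        apply hW.2
        have h1 := hrp W hW.1.1
        rw [hW.1.2] at h1
        rw [h1]
        exact ⟨hy, hmem⟩
      have hinj : Set.InjOn (fun W => (rp W).2) {W ∈ R n | y ∉ W} := by
        intro W hW W' hW' hh
        have h1 := hrp W hW.1.1
        have h2 := hrp W' hW'.1.1
        rw [hW.1.2] at h1
        rw [hW'.1.2] at h2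
        rw [h1, h2]
        simp only at hh
        rw [hh]
      exact Set.Finite.of_finite_image ((htr n y).subset himg) hinj
    have hS : {W ∈ R n | y ∈ W}.Infinite := by
      by_contra hfin
      rw [Set.not_infinite] at hfin
      apply hRinf
      refine (hfin.union hfin1).subset ?_
      intro W hW
      by_cases h : y ∈ W
      · exact Or.inl ⟨hW, h⟩
      · exact Or.inr ⟨hW, h⟩
    rcases hTlin (xout n) y with h | h
    · exact h
    · exfalso
      refine (hS.mono ?_) h
      intro W hW
      refine ⟨⟨hW.1.1, hW.2⟩, ?_⟩
      rintro ⟨-, hmem⟩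
      exact hxout n (hsubg W hW.1 hmem)
  let B : Set ℕ := {n | (R n).Infinite}
  suffices hsuf : ∃ FF : ℕ → Set (Set α), (∀ n, (FF n).Finite) ∧ (∀ n, FF n ⊆ 𝒰 n) ∧
      (∀ F : Set α, F.Finite → ∃ U ∈ ⋃ k, FF k, F ⊆ U) by
    obtain ⟨FF, hfin, hsub, homg⟩ := hsuf
    have hGmem : (⋃ k, FF k) ∈
        {𝒰 : Set (Set α) | 𝒰.Countable ∧ (∀ U ∈ 𝒰, good U) ∧ IsOmegaCover 𝒰} := by
      refine ⟨Set.countable_iUnion (fun n => (hfin n).countable), ?_, ⟨?_, ?_⟩, homg⟩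
      · intro U hU
        obtain ⟨n, hn⟩ := Set.mem_iUnion.1 hU
        exact (h𝒰 n).2.1 _ (hsub n hn)
      · apply Set.eq_univ_of_forall
        intro x
        obtain ⟨U, hU, hxU⟩ := homg {x} (Set.finite_singleton x)
        exact ⟨U, hU, hxU rfl⟩
      · intro hU
        obtain ⟨n, hn⟩ := Set.mem_iUnion.1 hU
        exact hUnotuniv n (hsub n hn)
    obtain ⟨ℋ, hℋsub, hℋmem⟩ := hb _ hGmem
    refine ⟨fun n => FF n ∩ ℋ, fun n => ⟨(hfin n).inter_of_left _,
      Set.inter_subset_left.trans (hsub n)⟩, ?_⟩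
    have h : (⋃ n, FF n ∩ ℋ) = ℋ := by
      rw [← Set.iUnion_inter]
      exact Set.inter_eq_right.2 hℋsub
    rw [h]
    exact hℋmem
  by_cases hBf : B.Finite
  · refine ⟨fun n => if n ∈ B then ∅ else (fun W => e n (rp W).2) '' (R n), ?_, ?_, ?_⟩
    · intro n
      by_cases h : n ∈ B
      · simp only [if_pos h]
        exact Set.finite_empty
      · simp only [if_neg h]
        exact (Set.not_infinite.1 h).image _
    · intro n
      by_cases h : n ∈ B
      · simp only [if_pos h]
        exact Set.empty_subset _
      · simp only [if_neg h]
        rintro _ ⟨W, hW, rfl⟩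
        exact emem n _
    · intro F hF
      have hF' : (F ∪ xout '' B).Finite := hF.union (hBf.image _)
      obtain ⟨W, hW⟩ := (homega𝒲 _ hF').nonempty
      have hWsubg : W ⊆ e 0 (rp W).1 := by
        conv_lhs => rw [hrp W hW.1]
        exact Set.inter_subset_left
      have hWsube : W ⊆ e (rp W).1 (rp W).2 := by
        conv_lhs => rw [hrp W hW.1]
        exact Set.inter_subset_right
      have hWB : (rp W).1 ∉ B := by
        intro hmemB
        have hx : xout (rp W).1 ∈ W :=
          hW.2 _ (Set.mem_union_right _ ⟨(rp W).1, hmemB, rfl⟩)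
        exact hxout (rp W).1 (hWsubg hx)
      refine ⟨e (rp W).1 (rp W).2, ?_, ?_⟩
      · refine Set.mem_iUnion.2 ⟨(rp W).1, ?_⟩
        rw [if_neg hWB]
        exact ⟨W, ⟨hW.1, rfl⟩, rfl⟩
      · intro x hx
        exact hWsube (hW.2 x (Set.mem_union_left _ hx))
  · have hBinf : B.Infinite := hBf
    let bE := hBinf.natEmbedding
    let bn : ℕ → ℕ := fun i => (bE i : ℕ)
    have hbnB : ∀ i, bn i ∈ B := fun i => (bE i).2
    have hbninj : Function.Injective bn := fun i j h => bE.injective (Subtype.ext h)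
    let D : ℕ → Set (Set α) := fun k => {W ∈ 𝒲 | ∀ i ≤ k, xout (bn i) ∈ W}
    have hDinf : ∀ k, (D k).Infinite := by
      intro k
      have hfinset : ((fun i => xout (bn i)) '' {i | i ≤ k}).Finite :=
        (Set.finite_le_nat k).image _
      refine (homega𝒲 _ hfinset).mono ?_
      intro W hW
      exact ⟨hW.1, fun i hi => hW.2 _ ⟨i, hi, rfl⟩⟩
    obtain ⟨w, hwinj, hwD⟩ := exists_inj_seq D hDinf
    have hw𝒲 : ∀ k, w k ∈ 𝒲 := fun k => (hwD k).1
    have hwM : ∀ k, w k = M (rp (w k)).1 (rp (w k)).2 := fun k => hrp _ (hw𝒲 k)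
    have key1 : ∀ x : α, {k | x ∉ w k}.Finite := by
      intro x
      obtain ⟨i, hi⟩ : ∃ i, x ∈ e 0 (bn i) := by
        have hbadfin : {i | x ∉ e 0 (bn i)}.Finite := by
          have h : {i | x ∉ e 0 (bn i)} = bn ⁻¹' {m | x ∉ e 0 m} := rfl
          rw [h]
          exact (htr 0 x).preimage hbninj.injOn
        obtain ⟨i, hi⟩ := hbadfin.infinite_compl.nonempty
        exact ⟨i, not_not.1 hi⟩
      have hks := keystar (bn i) (hbnB i) x hi
      refine ((Set.finite_lt_nat i).union (hks.preimage hwinj.injOn)).subset ?_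
      intro k hk
      by_cases hki : k < i
      · exact Or.inl hki
      · refine Or.inr ?_
        have hxi : xout (bn i) ∈ w k := (hwD k).2 i (by omega)
        exact ⟨⟨hw𝒲 k, hxi⟩, fun h => hk h.2⟩
    have key2 : ∀ n : ℕ, {k | (rp (w k)).1 = n}.Finite := by
      intro n
      rw [← Set.not_infinite]
      intro hKinf
      apply heneq 0 n
      apply Set.eq_univ_of_forall
      intro x
      obtain ⟨k, hk⟩ := (hKinf.diff (key1 x)).nonempty
      have hx : x ∈ w k := not_not.1 hk.2
      have h1 := hwM k
      rw [hk.1] at h1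
      rw [h1] at hx
      exact hx.1
    refine ⟨fun n => (fun k => e n (rp (w k)).2) '' {k | (rp (w k)).1 = n}, ?_, ?_, ?_⟩
    · intro n
      exact (key2 n).image _
    · intro n
      rintro _ ⟨k, hk, rfl⟩
      exact emem n _
    · intro F hF
      have hbad : (⋃ x ∈ F, {k | x ∉ w k}).Finite := hF.biUnion (fun x _ => key1 x)
      obtain ⟨k, hk⟩ := hbad.infinite_compl.nonempty
      refine ⟨e (rp (w k)).1 (rp (w k)).2, ?_, ?_⟩
      · exact Set.mem_iUnion.2 ⟨(rp (w k)).1, ⟨k, rfl, rfl⟩⟩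
      · intro x hx
        have hxw : x ∈ w k := by
          by_contra hxw
          exact hk (Set.mem_biUnion hx hxw)
        rw [hwM k] at hxw
        exact hxw.2

/-- `binom(Ω,T) ⊆ Sfin(Γ,T)`, and the Borel analogue. -/
theorem statement5 (X : Set ℝ) (hX : X.Infinite) :
    (Binom (OpenOmega ↥X) (OpenTau ↥X) → Sfin (OpenGamma ↥X) (OpenTau ↥X)) ∧
    (Binom (BorelOmega ↥X) (BorelTau ↥X) → Sfin (BorelGamma ↥X) (BorelTau ↥X)) := by
  haveI : Nonempty ↥X := hX.nonempty.to_subtype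
  constructor
  · intro h
    exact binom_to_sfin IsOpen (fun U V hU hV => hU.inter hV) h
  · intro h
    exact binom_to_sfin MeasurableSet (fun U V hU hV => hU.inter hV) h

end TauCoverPaper
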